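/- (Cancellation identity F_{ℓ,1}) Let L be a Lie algebra with elements X_1,...,X_m. For any word v of length ℓ ≥ 2, any word w (possibly empty), and any integer b ≥ 1, Σ_{σ ∈ S_ℓ} π_ℓ(σ) Σ_{i=1}^{ℓ} X_{σ_i(v)^b w} = 0, where σ_i(v)^b denotes the letter σ_i(v) repeated b times, X_{uw} is the left-nested bracket of the concatenated word, and when w is empty X_{σ_i(v)^b} is interpreted with the convention that a nested bracket of a single repeated letter of length ≥ 2 vanishes. -/

import Mathlib

/-!
The inner sum `∑ i, F (σ i)` does not depend on `σ`, so everything reduces to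
`∑ σ, π_ℓ σ = 0`. The coefficient `π_ℓ σ` vanishes unless the word of `σ` starts or ends with
the letter `0`, and right multiplication by the cycle `finRotate` moves a leading `0` to the end
while keeping the rest of the word, which flips the sign of `π_ℓ`. Hence the permutations
starting with `0` cancel against those ending with `0`.
-/

/-- The coefficient `π_ℓ` evaluated on the word `σ(1)σ(2)⋯σ(ℓ)` (letters `0,…,ℓ-1`),
defined inductively: value `1` on a single letter; if the word starts with the
smallest letter `0`, recurse on the remaining (shifted) word; if it ends with `0`,
recurse with a sign change; otherwise the value is `0`. -/
def piW : List ℕ → ℤ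
  | [] => 0
  | [_] => 1
  | a :: b :: l =>
    if a = 0 then piW ((b :: l).map (· - 1))
    else if (a :: b :: l).getLast? = some 0 then
      - piW ((a :: b :: l).dropLast.map (· - 1))
    else 0
termination_by w => w.length
decreasing_by all_goals (simp; try omega)

/-- `π_ℓ(σ)` for a permutation `σ` of `ℓ` letters. -/
def piPerm {ℓ : ℕ} (σ : Equiv.Perm (Fin ℓ)) : ℤ :=
  piW ((List.finRange ℓ).map (fun j => (σ j : ℕ)))

/-- Left-nested Lie bracket of a list: `[x₁,[x₂,…,[x_{k-1},x_k]…]]`. -/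
def nestedBracket {L : Type*} [LieRing L] : List L → L
  | [] => 0
  | [x] => x
  | x :: y :: l => ⁅x, nestedBracket (y :: l)⁆

open Equiv Finset

lemma piW_zero_cons (b : ℕ) (l : List ℕ) :
    piW (0 :: b :: l) = piW ((b :: l).map (· - 1)) := by
  rw [piW, if_pos rfl]

lemma piW_cons_append_singleton (a c : ℕ) (t : List ℕ) (ha : a ≠ 0) :
    piW (a :: t ++ [c]) = if c = 0 then -piW ((a :: t).map (· - 1)) else 0 := by
  obtain ⟨b, l, hbl⟩ := List.exists_cons_of_ne_nil (List.concat_ne_nil c t)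
  have hlast : (a :: b :: l).getLast? = some c := by
    rw [← hbl, ← List.cons_append, List.getLast?_concat]
  have hdrop : (a :: b :: l).dropLast = a :: t := by
    rw [← hbl, ← List.cons_append, List.dropLast_concat]
  rw [List.cons_append, hbl, piW, if_neg ha, hlast, hdrop]
  simp only [Option.some.injEq]

lemma piPerm_eq_piW_ofFn {ℓ : ℕ} (σ : Perm (Fin ℓ)) :
    piPerm σ = piW (List.ofFn fun j => (σ j : ℕ)) := by
  rw [piPerm, List.ofFn_eq_map]

lemma finRotate_castSucc {n : ℕ} (j : Fin n) : finRotate (n + 1) j.castSucc = j.succ :=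
  Fin.ext <| by rw [coe_finRotate_of_ne_last (Fin.castSucc_ne_last j)]; rfl

section

variable {n : ℕ}

lemma piPerm_eq_piW_cons_append (σ : Perm (Fin (n + 2))) :
    piPerm σ = piW ((σ 0 : ℕ) :: List.ofFn (fun i : Fin n => (σ i.succ.castSucc : ℕ)) ++
      [(σ (Fin.last _) : ℕ)]) := by
  rw [piPerm_eq_piW_ofFn, List.ofFn_succ_last, List.ofFn_succ]
  rfl

lemma piPerm_eq_of_apply_zero (σ : Perm (Fin (n + 2))) (h : σ 0 = 0) :
    piPerm σ = piW (((σ 1 : ℕ) :: List.ofFn fun i : Fin n => (σ i.succ.succ : ℕ)).map (· - 1)) := by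
  rw [piPerm_eq_piW_ofFn, List.ofFn_succ, List.ofFn_succ, h]
  exact piW_zero_cons _ _

lemma piPerm_mul_finRotate (σ : Perm (Fin (n + 2))) (h : σ 0 = 0) :
    piPerm (σ * finRotate (n + 2)) = -piPerm σ := by
  have h1 : σ 1 ≠ 0 := h ▸ σ.injective.ne one_ne_zero
  rw [piPerm_eq_of_apply_zero σ h, piPerm_eq_piW_cons_append]
  simp only [Perm.mul_apply, finRotate_apply_zero, finRotate_castSucc, finRotate_last, h]
  rw [piW_cons_append_singleton _ _ _ (mt Fin.val_eq_zero_iff.1 h1), if_pos (Fin.val_zero _)]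

lemma piPerm_eq_zero (σ : Perm (Fin (n + 2))) (h0 : σ 0 ≠ 0) (hlast : σ (Fin.last _) ≠ 0) :
    piPerm σ = 0 := by
  rw [piPerm_eq_piW_cons_append, piW_cons_append_singleton _ _ _ (mt Fin.val_eq_zero_iff.1 h0),
    if_neg (mt Fin.val_eq_zero_iff.1 hlast)]

end

theorem sum_piPerm_eq_zero (n : ℕ) : ∑ σ : Perm (Fin (n + 2)), piPerm σ = 0 := by
  classical
  set A := univ.filter fun σ : Perm (Fin (n + 2)) => σ 0 = 0
  set B := univ.filter fun σ : Perm (Fin (n + 2)) => σ (Fin.last _) = 0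
  have hAB : Disjoint A B := disjoint_filter.2 fun σ _ h0 hlast =>
    Fin.last_pos.ne' (σ.injective (hlast.trans h0.symm))
  have hB : ∑ σ ∈ A, piPerm (σ * finRotate _) = ∑ σ ∈ B, piPerm σ := by
    refine sum_nbij' (· * finRotate _) (· * (finRotate _)⁻¹) ?_ ?_ ?_ ?_ fun _ _ => rfl
    · intro σ hσ
      simp only [A, B, mem_filter, mem_univ, true_and] at hσ ⊢
      rw [Perm.mul_apply, finRotate_last, hσ]
    · intro τ hτ
      simp only [A, B, mem_filter, mem_univ, true_and] at hτ ⊢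
      rw [Perm.mul_apply, Perm.inv_eq_iff_eq.2 finRotate_last.symm, hτ]
    · exact fun σ _ => mul_inv_cancel_right σ _
    · exact fun τ _ => inv_mul_cancel_right τ _
  calc ∑ σ, piPerm σ = ∑ σ ∈ A ∪ B, piPerm σ := by
        refine (sum_subset (subset_univ _) fun σ _ hσ => ?_).symm
        simp only [mem_union, mem_filter, mem_univ, true_and, not_or, A, B] at hσ
        exact piPerm_eq_zero σ hσ.1 hσ.2
    _ = ∑ σ ∈ A, (piPerm σ + piPerm (σ * finRotate _)) := by
        rw [sum_union hAB, sum_add_distrib, hB]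
    _ = 0 := sum_eq_zero fun σ hσ => by
        rw [piPerm_mul_finRotate σ (mem_filter.1 hσ).2, add_neg_cancel]

theorem sum_piPerm_smul_sum_apply {M : Type*} [AddCommGroup M] {ℓ : ℕ} (hℓ : 2 ≤ ℓ)
    (F : Fin ℓ → M) : ∑ σ : Perm (Fin ℓ), piPerm σ • ∑ i, F (σ i) = 0 := by
  obtain ⟨n, rfl⟩ := Nat.exists_eq_add_of_le' hℓ
  simp only [Equiv.sum_comp]
  rw [← sum_smul, sum_piPerm_eq_zero, zero_smul]

theorem cancellation_F_ell_one_general {L : Type*} [LieRing L] {m ℓ q : ℕ}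
    (hℓ : 2 ≤ ℓ) (b : ℕ)
    (X : Fin m → L) (v : Fin ℓ → Fin m) (w : Fin q → Fin m) :
    ∑ σ : Equiv.Perm (Fin ℓ), piPerm σ •
      ∑ i : Fin ℓ,
        nestedBracket
          (List.replicate b (X (v (σ i))) ++ (List.finRange q).map fun j => X (w j)) = 0 :=
  sum_piPerm_smul_sum_apply hℓ fun k =>
    nestedBracket (List.replicate b (X (v k)) ++ (List.finRange q).map fun j => X (w j))

/-- the cancellation identity `F_{ℓ,1}`:
`Σ_{σ ∈ S_ℓ} π_ℓ(σ) Σ_{i=1}^ℓ X_{σ_i(v)^b w} = 0` for `ℓ ≥ 2`, `b ≥ 1` and any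
(possibly empty) word `w`. -/
theorem cancellation_F_ell_one {L : Type*} [LieRing L] {m ℓ q : ℕ}
    (hℓ : 2 ≤ ℓ) (b : ℕ) (hb : 1 ≤ b)
    (X : Fin m → L) (v : Fin ℓ → Fin m) (w : Fin q → Fin m) :
    ∑ σ : Equiv.Perm (Fin ℓ), piPerm σ •
      ∑ i : Fin ℓ,
        nestedBracket
          (List.replicate b (X (v (σ i))) ++ (List.finRange q).map fun j => X (w j)) = 0 :=
  cancellation_F_ell_one_general hℓ b X v w
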